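/- For every nonnegative integer n, ₃F₂(-n, (n+1)/2, n/2; 1/3, 2/3; 1) = (1 + 2·(-8)ⁿ)/(3·4ⁿ). -/

import Mathlib

open scoped BigOperators

/-- Pochhammer symbol `(a)_n = a(a+1)⋯(a+n-1)`. -/
noncomputable def poch (a : ℝ) (n : ℕ) : ℝ := ∏ i ∈ Finset.range n, (a + i)


lemma poch_zero (a : ℝ) : poch a 0 = 1 := by simp [poch]

lemma poch_succ (a : ℝ) (n : ℕ) : poch a (n+1) = poch a n * (a + n) := by
  simp [poch, Finset.prod_range_succ]

lemma poch_succ' (a : ℝ) (n : ℕ) : poch a (n+1) = a * poch (a+1) n := by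
  rw [poch, Finset.prod_range_succ', poch, mul_comm]
  rw [show ((0:ℕ):ℝ) = 0 from by norm_num, add_zero]
  congr 1
  exact Finset.prod_congr rfl fun i _ => by push_cast; ring

lemma poch_den (k : ℕ) :
    poch (1/3) k * poch (2/3) k * (Nat.factorial k) * 27^k = ((3*k).factorial : ℝ) := by
  induction k with
  | zero => simp [poch_zero]
  | succ k ih =>
    rw [poch_succ, poch_succ, show 3*(k+1) = 3*k+1+1+1 from by ring,
      Nat.factorial_succ, Nat.factorial_succ, Nat.factorial_succ, Nat.factorial_succ, pow_succ]
    push_cast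
    linear_combination ((1/3+(k:ℝ))*(2/3+k)*((k:ℝ)+1)*27) * ih

lemma poch_dup (x : ℝ) (k : ℕ) :
    poch (x/2) k * poch ((x+1)/2) k * 4^k = poch x (2*k) := by
  induction k with
  | zero => simp [poch_zero]
  | succ k ih =>
    rw [poch_succ, poch_succ, show 2*(k+1) = 2*k+1+1 from by ring, poch_succ, poch_succ,
      pow_succ]
    push_cast
    linear_combination ((x/2+(k:ℝ))*((x+1)/2+k)*4) * ih

lemma poch_nat (a : ℕ) (m : ℕ) :
    poch ((a:ℝ)+1) m * a.factorial = ((a+m).factorial : ℝ) := by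
  induction m with
  | zero => simp [poch_zero]
  | succ m ih =>
    rw [poch_succ, show a+(m+1) = (a+m)+1 from rfl, Nat.factorial_succ]
    push_cast
    linear_combination ((a:ℝ)+m+1) * ih

lemma poch_neg (k m : ℕ) :
    poch (-((k+m : ℕ):ℝ)) k * m.factorial = (-1)^k * ((k+m).factorial : ℝ) := by
  induction k with
  | zero => simp [poch_zero]
  | succ k ih =>
    rw [poch_succ', show (-((k+1+m : ℕ):ℝ)) + 1 = -((k+m : ℕ):ℝ) from by push_cast; ring,
      show k+1+m = (k+m)+1 from by ring, Nat.factorial_succ]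
    push_cast at ih ⊢
    linear_combination (-((k:ℝ)+m+1)) * ih

lemma poch_neg_zero {n k : ℕ} (h : n < k) : poch (-(n:ℝ)) k = 0 := by
  apply Finset.prod_eq_zero (Finset.mem_range.mpr h)
  simp

lemma poch_pos {a : ℝ} (ha : 0 < a) (k : ℕ) : 0 < poch a k :=
  Finset.prod_pos fun i _ => by positivity

noncomputable def t (n k : ℕ) : ℝ :=
  if k ≤ n then (-27/4:ℝ)^k * (n.factorial) * ((n+2*k-1).factorial) /
    ((n-k).factorial * (n-1).factorial * (3*k).factorial) else 0

lemma fac_ne (m : ℕ) : ((m.factorial : ℝ)) ≠ 0 :=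
  Nat.cast_ne_zero.mpr (Nat.factorial_pos m).ne'

lemma term_eq (n k : ℕ) :
    poch (-(n:ℝ)) k * poch (((n:ℝ)+1)/2) k * poch ((n:ℝ)/2) k /
      (poch (1/3) k * poch (2/3) k * (Nat.factorial k)) = t n k := by
  by_cases hk : k ≤ n
  · rcases Nat.eq_zero_or_pos k with h0 | hpos
    · subst h0
      rw [t, if_pos (by omega)]
      simp only [poch_zero, Nat.mul_zero, Nat.add_zero, Nat.sub_zero, Nat.factorial_zero]
      rw [pow_zero, one_mul, Nat.cast_one]
      field_simp
    · obtain ⟨j, rfl⟩ : ∃ j, k = j + 1 := ⟨k-1, by omega⟩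
      obtain ⟨m, rfl⟩ : ∃ m, n = j + 1 + m := ⟨n - (j+1), by omega⟩
      have hA := poch_neg (j+1) m
      have hB := poch_dup (((j+1+m : ℕ)):ℝ) (j+1)
      have hC : poch (((j+1+m:ℕ)):ℝ) (2*(j+1)) * ((j+m).factorial:ℝ)
          = ((3*j+m+2).factorial :ℝ) := by
        have h := poch_nat (j+m) (2*(j+1))
        rw [show (((j+m:ℕ)):ℝ)+1 = ((j+1+m:ℕ):ℝ) from by push_cast; ring,
          show j+m+2*(j+1) = 3*j+m+2 from by ring] at h
        exact h
      have hD := poch_den (j+1)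
      have eA : poch (-((j+1+m:ℕ):ℝ)) (j+1)
          = (-1)^(j+1) * (((j+1+m).factorial : ℝ)) / m.factorial := by
        rw [eq_div_iff (fac_ne m)]; exact hA
      have eBC : poch ((((j+1+m:ℕ):ℝ)+1)/2) (j+1) * poch (((j+1+m:ℕ):ℝ)/2) (j+1)
          = ((3*j+m+2).factorial : ℝ) / (((j+m).factorial:ℝ) * 4^(j+1)) := by
        rw [eq_div_iff (mul_ne_zero (fac_ne _) (by positivity))]
        linear_combination (((j+m).factorial : ℝ)) * hB + hC
      have eDE : poch (1/3) (j+1) * poch (2/3) (j+1)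
          = ((3*(j+1)).factorial : ℝ) / (((j+1).factorial : ℝ) * 27^(j+1)) := by
        rw [eq_div_iff (mul_ne_zero (fac_ne _) (by positivity))]
        linear_combination hD
      rw [t, if_pos hk,
        show j+1+m+2*(j+1)-1 = 3*j+m+2 from by omega,
        show j+1+m-(j+1) = m from by omega,
        show j+1+m-1 = j+m from by omega,
        mul_assoc, eBC, eA, eDE,
        show (-27/4 : ℝ)^(j+1) = (-1)^(j+1) * 27^(j+1) / 4^(j+1) from by
          rw [← mul_pow, ← div_pow]; norm_num]
      have h27 : (27:ℝ)^(j+1) ≠ 0 := by positivity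
      have h4 : (4:ℝ)^(j+1) ≠ 0 := by positivity
      field_simp
  · rw [poch_neg_zero (by omega), t, if_neg hk]; simp

noncomputable def g : ℕ → ℕ → ℝ
  | _, 0 => 0
  | n, (j+1) => if j ≤ n + 1 then
      (9/2) * (-27/4:ℝ)^j * ((n+2*j+1).factorial) /
        ((n+1-j).factorial * ((3*j).factorial)) else 0

lemma fac_succ (a : ℕ) : (((a+1).factorial : ℝ)) = ((a:ℝ)+1) * (a.factorial : ℝ) := by
  rw [Nat.factorial_succ]; push_cast; ring

set_option maxHeartbeats 2000000 in
lemma cert (n k : ℕ) :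
    2 * t (n+2) k + 7/2 * t (n+1) k - t n k = g n (k+1) - g n k := by
  rcases Nat.eq_zero_or_pos k with h0 | hpos
  · subst h0
    simp only [t, g, if_pos (show 0 ≤ n+2 by omega), if_pos (show 0 ≤ n+1 by omega),
      if_pos (show 0 ≤ n by omega), if_pos (show 0 ≤ n+1 by omega)]
    simp only [show n+2+2*0-1 = n+1 from by omega, show n+1+2*0-1 = n from by omega,
      show n+2*0-1 = n-1 from by omega, show n+2-0 = n+2 from by omega,
      show n+1-0 = n+1 from by omega, show n-0 = n from by omega,
      show n+2-1 = n+1 from by omega, show n+1-1 = n from by omega,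
      show 3*0 = 0 from by omega, show n+2*0+1 = n+1 from by omega,
      show n+1-0 = n+1 from by omega, pow_zero, Nat.factorial_zero]
    have h1 := fac_ne (n+2)
    have h2 := fac_ne (n+1)
    have h3 := fac_ne n
    have h4 := fac_ne (n-1)
    field_simp
    ring
  · obtain ⟨j, rfl⟩ : ∃ j, k = j + 1 := ⟨k-1, by omega⟩
    by_cases hk : j + 1 ≤ n
    · obtain ⟨m, rfl⟩ : ∃ m, n = j + 1 + m := ⟨n - (j+1), by omega⟩
      simp only [t, g, if_pos (show j+1 ≤ j+1+m+2 by omega),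
        if_pos (show j+1 ≤ j+1+m+1 by omega), if_pos hk,
        if_pos (show j+1 ≤ j+1+m+1 by omega), if_pos (show j ≤ j+1+m+1 by omega)]
      simp only [show j+1+m+2+2*(j+1)-1 = 3*j+m+4 from by omega,
        show j+1+m+1+2*(j+1)-1 = 3*j+m+3 from by omega,
        show j+1+m+2*(j+1)-1 = 3*j+m+2 from by omega,
        show j+1+m+2-(j+1) = m+2 from by omega,
        show j+1+m+1-(j+1) = m+1 from by omega,
        show j+1+m-(j+1) = m from by omega,
        show j+1+m+2-1 = j+m+2 from by omega,
        show j+1+m+1-1 = j+m+1 from by omega,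
        show j+1+m-1 = j+m from by omega,
        show j+1+m+2*(j+1)+1 = 3*j+m+4 from by omega,
        show j+1+m+1-(j+1) = m+1 from by omega,
        show j+1+m+2*j+1 = 3*j+m+2 from by omega,
        show j+1+m+1-j = m+2 from by omega,
        show 3*(j+1) = 3*j+3 from by omega]
      simp only [show j+1+m = j+m+1 from by omega]
      simp only [show (3:ℕ)*j+m+4 = (3*j+m+3)+1 from by omega, fac_succ (3*j+m+3),
        show (3:ℕ)*j+m+3 = (3*j+m+2)+1 from by omega, fac_succ (3*j+m+2),
        show (j:ℕ)+m+3 = (j+m+2)+1 from by omega, fac_succ (j+m+2),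
        show (j:ℕ)+m+2 = (j+m+1)+1 from by omega, fac_succ (j+m+1),
        show (j:ℕ)+m+1 = (j+m)+1 from by omega, fac_succ (j+m),
        show (m:ℕ)+2 = (m+1)+1 from by omega, fac_succ (m+1),
        show (m:ℕ)+1 = m+1 from rfl, fac_succ m,
        show (3:ℕ)*j+3 = (3*j+2)+1 from by omega, fac_succ (3*j+2),
        show (3:ℕ)*j+2 = (3*j+1)+1 from by omega, fac_succ (3*j+1),
        show (3:ℕ)*j+1 = (3*j)+1 from by omega, fac_succ (3*j),
        pow_succ (-27/4:ℝ) j]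
      have h1 := fac_ne m
      have h2 := fac_ne (j+m)
      have h3 := fac_ne (3*j)
      have h4 := fac_ne (3*j+m+2)
      push_cast
      field_simp
      ring
    · by_cases hk1 : j + 1 = n+1
      · obtain rfl : j = n := by omega
        simp only [t, g, if_pos (show j+1 ≤ j+2 by omega),
          if_pos (show j+1 ≤ j+1 by omega), if_neg (show ¬ (j+1 ≤ j) by omega),
          if_pos (show j+1 ≤ j+1 by omega), if_pos (show j ≤ j+1 by omega)]
        simp only [show j+2+2*(j+1)-1 = 3*j+3 from by omega,
          show j+1+2*(j+1)-1 = 3*j+2 from by omega,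
          show j+2-(j+1) = 1 from by omega,
          show j+1-(j+1) = 0 from by omega,
          show j+2-1 = j+1 from by omega,
          show j+1-1 = j from by omega,
          show j+2*(j+1)+1 = 3*j+3 from by omega,
          show j+2*j+1 = 3*j+1 from by omega,
          show j+1-j = 1 from by omega,
          show 3*(j+1) = 3*j+3 from by omega]
        simp only [show (3:ℕ)*j+3 = (3*j+2)+1 from by omega, fac_succ (3*j+2),
          show (3:ℕ)*j+2 = (3*j+1)+1 from by omega, fac_succ (3*j+1),
          show (3:ℕ)*j+1 = (3*j)+1 from by omega, fac_succ (3*j),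
          show (j:ℕ)+2 = (j+1)+1 from by omega, fac_succ (j+1),
          show (j:ℕ)+1 = j+1 from rfl, fac_succ j,
          pow_succ (-27/4:ℝ) j, Nat.factorial_zero, Nat.factorial_one]
        have h1 := fac_ne j
        have h3 := fac_ne (3*j)
        push_cast
        field_simp
        ring
      · by_cases hk2 : j+1 = n+2
        · obtain rfl : j = n+1 := by omega
          simp only [t, g, if_pos (show n+2 ≤ n+2 by omega),
            if_neg (show ¬ (n+2 ≤ n+1) by omega), if_neg (show ¬ (n+2 ≤ n) by omega),
            if_neg (show ¬ (n+2 ≤ n+1) by omega), if_pos (show n+1 ≤ n+1 by omega)]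
          simp only [show n+2+2*(n+2)-1 = 3*n+5 from by omega,
            show n+2-(n+2) = 0 from by omega,
            show n+2-1 = n+1 from by omega,
            show 3*(n+2) = 3*n+6 from by omega,
            show n+2*(n+1)+1 = 3*n+3 from by omega,
            show n+1-(n+1) = 0 from by omega,
            show 3*(n+1) = 3*n+3 from by omega]
          simp only [show (3:ℕ)*n+6 = (3*n+5)+1 from by omega, fac_succ (3*n+5),
            show (n:ℕ)+2 = (n+1)+1 from by omega, fac_succ (n+1),
            pow_succ (-27/4:ℝ) (n+1), Nat.factorial_zero]
          have h1 := fac_ne (n+1)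
          have h2 := fac_ne (3*n+5)
          have h3 := fac_ne (3*n+3)
          push_cast
          field_simp
          ring
        · simp only [t, g, if_neg (show ¬ (j+1 ≤ n+2) by omega),
            if_neg (show ¬ (j+1 ≤ n+1) by omega), if_neg (show ¬ (j+1 ≤ n) by omega),
            if_neg (show ¬ (j ≤ n+1) by omega)]
          ring

noncomputable def S (n : ℕ) : ℝ := ∑ k ∈ Finset.range (n+1), t n k

lemma t_zero {n k : ℕ} (h : n < k) : t n k = 0 := by rw [t, if_neg (by omega)]

lemma S_ext (n N : ℕ) (h : n+1 ≤ N) : ∑ k ∈ Finset.range N, t n k = S n := by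
  rw [S]
  symm
  apply Finset.sum_subset (Finset.range_subset_range.mpr h)
  intro x _ hx
  exact t_zero (by simp at hx; omega)

lemma g_top (n : ℕ) : g n (n+3) = 0 := by
  show (if n+2 ≤ n+1 then _ else 0) = 0
  rw [if_neg (by omega)]

lemma S_rec (n : ℕ) : 2 * S (n+2) + 7/2 * S (n+1) - S n = 0 := by
  have h2 : S (n+2) = ∑ k ∈ Finset.range (n+3), t (n+2) k := (S_ext (n+2) (n+3) (by omega)).symm
  have h1 : S (n+1) = ∑ k ∈ Finset.range (n+3), t (n+1) k := (S_ext (n+1) (n+3) (by omega)).symm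
  have h0 : S n = ∑ k ∈ Finset.range (n+3), t n k := (S_ext n (n+3) (by omega)).symm
  rw [h2, h1, h0, Finset.mul_sum, Finset.mul_sum, ← Finset.sum_add_distrib,
    ← Finset.sum_sub_distrib]
  rw [Finset.sum_congr rfl (fun k _ => cert n k), Finset.sum_range_sub (g n) (n+3),
    g_top]
  simp [g]

lemma S_closed (n : ℕ) : S n = (1 + 2 * (-8 : ℝ) ^ n) / (3 * 4 ^ n) := by
  have base0 : S 0 = 1 := by
    rw [S]
    simp [t, Nat.factorial]
  have base1 : S 1 = -5/4 := by
    rw [S]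
    rw [Finset.sum_range_succ, Finset.sum_range_one]
    rw [t, if_pos (by omega), t, if_pos (by omega)]
    norm_num [Nat.factorial]
  have key : ∀ m, S m = (1 + 2 * (-8 : ℝ) ^ m) / (3 * 4 ^ m) ∧
      S (m+1) = (1 + 2 * (-8 : ℝ) ^ (m+1)) / (3 * 4 ^ (m+1)) := by
    intro m
    induction m with
    | zero => refine ⟨by rw [base0]; norm_num, by rw [base1]; norm_num⟩
    | succ m ih =>
      refine ⟨ih.2, ?_⟩
      have hr := S_rec m
      rw [ih.1, ih.2] at hr
      have h4 : (4:ℝ)^m ≠ 0 := by positivity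
      rw [show m+1+1 = m+2 from rfl]
      rw [show S (m+2) = (S m - 7/2 * S (m+1)) / 2 from by
        have := S_rec m; linarith [S_rec m]]
      rw [ih.1, ih.2, pow_succ, pow_succ, pow_succ (4:ℝ), pow_succ (4:ℝ) m,
        pow_succ (-8:ℝ), pow_succ (-8:ℝ) m]
      field_simp
      ring
  exact (key n).1

theorem stmt8 (n : ℕ) :
    ∑ k ∈ Finset.range (n+1),
      poch (-(n:ℝ)) k * poch (((n:ℝ)+1)/2) k * poch ((n:ℝ)/2) k /
        (poch (1/3) k * poch (2/3) k * (Nat.factorial k))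
      = (1 + 2 * (-8 : ℝ) ^ n) / (3 * 4 ^ n) := by
  rw [Finset.sum_congr rfl (fun k _ => term_eq n k)]
  exact S_closed n
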